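/- Let N = 1 + p + q + r and write points of ℂ^N as (z, u, v, w) ∈ ℂ × ℂ^p × ℂ^q × ℂ^r, so that ℍ^N = {(z,u,v,w) : Im z > |u|² + |v|² + |w|²}. Let a ∈ ℂ^p, b ∈ ℂ, c = (c₁,…,c_r) ∈ ℂ^r, let D be a q×q diagonal matrix whose diagonal entries have modulus 1 and are different from 1, and let A = diag(λ₁, …, λ_r) with λ_j = exp(−u_j + i v_j), u_j > 0, v_j ∈ [0, 2π). Assume ψ(z,u,v,w) = (z + 2i⟨u, a⟩ + 2i⟨w, c⟩ + b, u + a, D v, A w) is a self-map of ℍ^N. If Im(b) − |a|² ≥ Σ_{j=1}^{r} (u_j² + v_j²)/(2 u_j |1 − λ_j|²) · |c_j|², then ψ can be embedded into a semigroup of holomorphic self-maps of ℍ^N. -/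

import Mathlib

/-! With `ζ_j = -u_j + i v_j` (so `λ_j = e^{ζ_j}`), `e_j = e^{μ_j}` for the principal logarithm
`μ_j`, and `k_j = conj c_j / (1 - λ_j)`, the semigroup is
`φ_t(z,u,v,w) = (z + 2it⟨u,a⟩ + 2i ∑_j (1 - e^{tζ_j}) k_j w_j + tb + it(t-1)|a|², u + ta,
(e^{tμ_j} v_j)_j, (e^{tζ_j} w_j)_j)`;
the term `it(t-1)|a|²` is what makes `φ_{s+t} = φ_s ∘ φ_t` hold in the first coordinate.
Under `φ_t` the height `Im z - |u|² - |v|² - |w|²` changes by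
`t (Im b - |a|²) + ∑_j [(1 - |e^{tζ_j}|²) |w_j|² + 2 Re ((1 - e^{tζ_j}) k_j w_j)]`.
Each bracket is a real quadratic form in `w_j`, bounded below by
`-t (u_j² + v_j²) / (2 u_j |1 - λ_j|²) |c_j|²` because
`|1 - e^{tζ}|² ≤ t |ζ|² / (2u) · (1 - |e^{tζ}|²)`, so the hypothesis on `Im b - |a|²` is exactly
what keeps the height positive. -/

open Matrix Set Complex Filter

noncomputable section

/-- The Hermitian inner product `⟨x, y⟩ = ∑ j, x j * conj (y j)` on `ℂ^n`. -/
def herm {n : Type*} [Fintype n] (x y : n → ℂ) : ℂ :=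
  ∑ j, x j * (starRingEnd ℂ) (y j)

/-- The squared Euclidean norm on `ℂ^n`. -/
def enormSq {n : Type*} [Fintype n] (x : n → ℂ) : ℝ :=
  ∑ j, ‖x j‖ ^ 2

/-- `(φ t)_{t ≥ 0}` is a (continuous) semigroup of holomorphic self-maps of `U`. -/
def IsHolSemigroupOn {E : Type*} [NormedAddCommGroup E] [NormedSpace ℂ E]
    (U : Set E) (φ : ℝ → E → E) : Prop :=
  (∀ t : ℝ, 0 ≤ t → MapsTo (φ t) U U) ∧
  (∀ t : ℝ, 0 ≤ t → DifferentiableOn ℂ (φ t) U) ∧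
  (∀ z ∈ U, φ 0 z = z) ∧
  (∀ s : ℝ, 0 ≤ s → ∀ t : ℝ, 0 ≤ t → ∀ z ∈ U, φ (s + t) z = φ s (φ t z)) ∧
  (∀ K : Set E, K ⊆ U → IsCompact K →
    TendstoUniformlyOn (fun t => φ t) id (nhdsWithin 0 (Ioi 0)) K)

/-- `ℂ^N = ℂ × ℂ^p × ℂ^q × ℂ^r`. -/
abbrev E4 (p q r : ℕ) : Type := ℂ × (Fin p → ℂ) × (Fin q → ℂ) × (Fin r → ℂ)

/-- The Siegel half-plane `ℍ^N = {(z,u,v,w) : Im z > |u|² + |v|² + |w|²}`. -/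
def Siegel4 (p q r : ℕ) : Set (E4 p q r) :=
  {x | enormSq x.2.1 + enormSq x.2.2.1 + enormSq x.2.2.2 < x.1.im}

open ComplexConjugate

lemma two_mul_le_exp_sub_exp_neg {s : ℝ} (hs : 0 ≤ s) : 2 * s ≤ Real.exp s - Real.exp (-s) := by
  have := Real.self_le_sinh_iff.mpr hs
  rw [Real.sinh_eq] at this
  linarith

/-- `tanh (s / 2) ≤ s / 2`. -/
lemma two_mul_one_sub_exp_neg_le {s : ℝ} (hs : 0 ≤ s) :
    2 * (1 - Real.exp (-s)) ≤ s * (1 + Real.exp (-s)) := by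
  let f : ℝ → ℝ := fun x => x * (1 + Real.exp (-x)) - 2 * (1 - Real.exp (-x))
  have hf : ∀ x, HasDerivAt f (1 - (1 + x) * Real.exp (-x)) x := fun x => by
    have he : HasDerivAt (fun x => Real.exp (-x)) (-Real.exp (-x)) x := by
      simpa [Function.comp_def] using (Real.hasDerivAt_exp (-x)).comp x (hasDerivAt_neg x)
    exact ((hasDerivAt_id x).mul (he.const_add 1)).sub ((he.const_sub 1).const_mul 2)
      |>.congr_deriv (by simp only [id]; ring)
  have hmono : MonotoneOn f (Ici 0) := by
    refine monotoneOn_of_deriv_nonneg (convex_Ici 0) ?_ ?_ ?_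
    · exact HasDerivAt.continuousOn fun x _ => hf x
    · exact fun x _ => (hf x).differentiableAt.differentiableWithinAt
    · intro x _
      rw [(hf x).deriv, sub_nonneg, Real.exp_neg, ← div_eq_mul_inv,
        div_le_one (Real.exp_pos x)]
      linarith [Real.add_one_le_exp x]
  have := hmono self_mem_Ici hs hs
  simp only [f, neg_zero, Real.exp_zero] at this
  linarith

/-- Cauchy–Schwarz for `1 - e^{tζ} = -∫₀ᵗ ζ e^{sζ} ds`, `ζ = -u + iv`, proved elementarily. -/
lemma norm_one_sub_exp_sq_le {u : ℝ} (hu : 0 < u) (v : ℝ) {t : ℝ} (ht : 0 ≤ t) :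
    ‖1 - exp (t * (-u + v * I))‖ ^ 2
      ≤ t * (u ^ 2 + v ^ 2) / (2 * u) * (1 - ‖exp (t * (-u + v * I))‖ ^ 2) := by
  rcases ht.eq_or_lt with rfl | ht
  · simp
  set s := t * u
  set θ := t * v
  set X := Real.exp (-s)
  have hs : 0 < s := mul_pos ht hu
  have hX : 0 < X := Real.exp_pos _
  have hexp : exp (t * (-u + v * I)) = X * exp (θ * I) := by
    rw [show (X : ℂ) = exp ((-s : ℝ) : ℂ) from ofReal_exp _, ← exp_add]
    push_cast [s, θ]
    ring_nf
  have hnorm : ‖exp (t * (-u + v * I))‖ = X := by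
    rw [hexp, norm_mul, norm_exp_ofReal_mul_I, mul_one, Complex.norm_of_nonneg hX.le]
  have hsq : ‖1 - exp (t * (-u + v * I))‖ ^ 2 = (1 - X) ^ 2 + 2 * X * (1 - Real.cos θ) := by
    rw [hexp, Complex.sq_norm, normSq_apply]
    simp only [sub_re, sub_im, one_re, one_im, re_ofReal_mul, im_ofReal_mul, exp_ofReal_mul_I_re,
      exp_ofReal_mul_I_im]
    nlinarith [Real.sin_sq_add_cos_sq θ]
  have hsinh : 2 * s * X ≤ 1 - X ^ 2 := by
    have h := mul_le_mul_of_nonneg_right (two_mul_le_exp_sub_exp_neg hs.le) hX.le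
    rwa [sub_mul, ← Real.exp_add, add_neg_cancel, Real.exp_zero, ← sq] at h
  have htanh : 2 * (1 - X) ^ 2 ≤ s * (1 - X ^ 2) := by
    have hX1 : 0 ≤ 1 - X := sub_nonneg.mpr (Real.exp_le_one_iff.mpr (neg_nonpos.mpr hs.le))
    nlinarith [mul_le_mul_of_nonneg_right (two_mul_one_sub_exp_neg_le hs.le) hX1]
  have hcos : 1 - Real.cos θ ≤ θ ^ 2 / 2 := by linarith [Real.one_sub_sq_div_two_le_cos (x := θ)]
  have hrhs : t * (u ^ 2 + v ^ 2) / (2 * u) = (s ^ 2 + θ ^ 2) / (2 * s) := by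
    field_simp
    ring
  rw [hsq, hnorm, hrhs, div_mul_eq_mul_div, le_div_iff₀ (by positivity)]
  nlinarith [mul_le_mul_of_nonneg_left hcos (by positivity : 0 ≤ 4 * s * X),
    mul_le_mul_of_nonneg_left hsinh (sq_nonneg θ)]

lemma quadratic_nonneg_of_norm_sq_le {α m : ℝ} (hα : 0 ≤ α) (hm : 0 ≤ m) {γ : ℂ}
    (hγ : ‖γ‖ ^ 2 ≤ α * m) (w : ℂ) : 0 ≤ α * ‖w‖ ^ 2 + 2 * (γ * w).re + m := by
  have hre : -(‖γ‖ * ‖w‖) ≤ (γ * w).re := by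
    rw [← norm_mul]
    exact neg_le_of_abs_le (abs_re_le_norm _)
  have hsq : (2 * (‖γ‖ * ‖w‖)) ^ 2 ≤ (α * ‖w‖ ^ 2 + m) ^ 2 := by
    nlinarith [mul_le_mul_of_nonneg_right hγ (sq_nonneg ‖w‖), sq_nonneg (α * ‖w‖ ^ 2 - m)]
  have := abs_le_of_sq_le_sq' hsq (by positivity)
  linarith [this.2]

lemma sq_norm_exp_ofReal_mul_le_one {t : ℝ} (ht : 0 ≤ t) {ζ : ℂ} (hζ : ζ.re ≤ 0) :
    ‖exp (t * ζ)‖ ^ 2 ≤ 1 := by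
  refine pow_le_one₀ (norm_nonneg _) ?_
  rw [norm_exp, re_ofReal_mul, Real.exp_le_one_iff]
  exact mul_nonpos_of_nonneg_of_nonpos ht hζ

lemma Continuous.tendstoUniformlyOn_of_isCompact {α β γ : Type*} [UniformSpace α]
    [WeaklyLocallyCompactSpace α] [UniformSpace β] [UniformSpace γ] {f : α → β → γ}
    (hf : Continuous (Function.uncurry f)) (x : α) {K : Set β} (hK : IsCompact K) :
    TendstoUniformlyOn f (f x) (nhds x) K := by
  have := isCompact_iff_compactSpace.mp hK
  rw [tendstoUniformlyOn_iff_tendstoUniformly_comp_coe]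
  exact Continuous.tendstoUniformly (fun a (y : K) => f a y)
    (hf.comp (continuous_id.prodMap continuous_subtype_val)) x

section HermLemmas

variable {n : Type*} [Fintype n]

lemma herm_self (a : n → ℂ) : herm a a = enormSq a := by
  simp only [herm, enormSq, mul_conj, ofReal_sum, ofReal_pow, normSq_eq_norm_sq]

lemma herm_add_smul_left (u a : n → ℂ) (t : ℂ) :
    herm (u + t • a) a = herm u a + t * enormSq a := by
  simp only [← herm_self, herm, Finset.mul_sum, ← Finset.sum_add_distrib, Pi.add_apply,
    Pi.smul_apply, smul_eq_mul]
  exact Finset.sum_congr rfl fun j _ => by ring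

lemma enormSq_add_smul (u a : n → ℂ) (t : ℝ) :
    enormSq (u + (t : ℂ) • a) = enormSq u + 2 * t * (herm u a).re + t ^ 2 * enormSq a := by
  simp only [enormSq, herm, re_sum, Finset.mul_sum, ← Finset.sum_add_distrib]
  refine Finset.sum_congr rfl fun j _ => ?_
  simp only [Pi.add_apply, Pi.smul_apply, smul_eq_mul, ← normSq_eq_norm_sq, normSq_add,
    normSq_ofReal, map_mul, conj_ofReal, re_ofReal_mul, mul_left_comm (u j)]
  ring

lemma enormSq_exp_mul (g x : n → ℂ) :
    enormSq (fun j => exp (g j) * x j) = enormSq x - ∑ j, (1 - ‖exp (g j)‖ ^ 2) * ‖x j‖ ^ 2 := by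
  simp only [enormSq, ← Finset.sum_sub_distrib, norm_mul, mul_pow]
  exact Finset.sum_congr rfl fun j _ => by ring

end HermLemmas

def siegelHeight {p q r : ℕ} (x : E4 p q r) : ℝ :=
  x.1.im - (enormSq x.2.1 + enormSq x.2.2.1 + enormSq x.2.2.2)

lemma mem_siegel4_iff {p q r : ℕ} {x : E4 p q r} : x ∈ Siegel4 p q r ↔ 0 < siegelHeight x := by
  rw [siegelHeight, sub_pos]
  rfl

def siegelFlow {p q r : ℕ} (a : Fin p → ℂ) (b : ℂ) (k : Fin r → ℂ) (μ : Fin q → ℂ)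
    (L : Fin r → ℂ) (t : ℝ) (x : E4 p q r) : E4 p q r :=
  (x.1 + 2 * I * t * herm x.2.1 a + 2 * I * ∑ j, (1 - exp (t * L j)) * k j * x.2.2.2 j
      + t * b + I * t * (t - 1) * enormSq a,
    x.2.1 + (t : ℂ) • a,
    fun j => exp (t * μ j) * x.2.2.1 j,
    fun j => exp (t * L j) * x.2.2.2 j)

section SiegelFlow

variable {p q r : ℕ} {a : Fin p → ℂ} {b : ℂ} {k : Fin r → ℂ} {μ : Fin q → ℂ} {L : Fin r → ℂ}

lemma siegelFlow_zero (x : E4 p q r) : siegelFlow a b k μ L 0 x = x := by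
  simp [siegelFlow]

lemma siegelFlow_add (s t : ℝ) (x : E4 p q r) :
    siegelFlow a b k μ L (s + t) x = siegelFlow a b k μ L s (siegelFlow a b k μ L t x) := by
  obtain ⟨z, u, v, w⟩ := x
  simp only [siegelFlow, herm_add_smul_left, Prod.mk.injEq]
  have hsum : ∑ j, (1 - exp ((s + t : ℝ) * L j)) * k j * w j
      = ∑ j, (1 - exp (t * L j)) * k j * w j
        + ∑ j, (1 - exp (s * L j)) * k j * (exp (t * L j) * w j) := by
    rw [← Finset.sum_add_distrib]
    refine Finset.sum_congr rfl fun j _ => ?_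
    rw [ofReal_add, add_mul, exp_add]
    ring
  refine ⟨?_, ?_, ?_, ?_⟩
  · rw [hsum]
    push_cast
    ring
  · rw [ofReal_add, add_smul, add_assoc, add_comm ((t : ℂ) • a)]
  · funext j
    rw [← mul_assoc, ← exp_add, ofReal_add, add_mul, add_comm]
  · funext j
    rw [← mul_assoc, ← exp_add, ofReal_add, add_mul, add_comm]

lemma differentiable_siegelFlow (t : ℝ) : Differentiable ℂ (siegelFlow a b k μ L t) := by
  unfold siegelFlow herm
  fun_prop

lemma continuous_uncurry_siegelFlow : Continuous (Function.uncurry (siegelFlow a b k μ L)) := by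
  unfold siegelFlow herm Function.uncurry
  fun_prop

lemma siegelHeight_siegelFlow (t : ℝ) (x : E4 p q r) :
    siegelHeight (siegelFlow a b k μ L t x) = siegelHeight x + t * (b.im - enormSq a)
      + ∑ j, (1 - ‖exp (t * μ j)‖ ^ 2) * ‖x.2.2.1 j‖ ^ 2
      + ∑ j, ((1 - ‖exp (t * L j)‖ ^ 2) * ‖x.2.2.2 j‖ ^ 2
          + 2 * ((1 - exp (t * L j)) * k j * x.2.2.2 j).re) := by
  have hfst : (siegelFlow a b k μ L t x).1.im = x.1.im + 2 * t * (herm x.2.1 a).re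
      + ∑ j, 2 * ((1 - exp (t * L j)) * k j * x.2.2.2 j).re + t * b.im
      + t * (t - 1) * enormSq a := by
    simp [siegelFlow, Finset.mul_sum]
  rw [siegelHeight, siegelHeight, hfst]
  simp only [siegelFlow, enormSq_add_smul, enormSq_exp_mul, Finset.sum_add_distrib]
  ring

lemma mapsTo_siegelFlow {t : ℝ} (ht : 0 ≤ t) (hμ : ∀ j, (μ j).re ≤ 0) (hL : ∀ j, (L j).re ≤ 0)
    (m : Fin r → ℝ) (hm : ∀ j, 0 ≤ m j)
    (hk : ∀ j, ‖(1 - exp (t * L j)) * k j‖ ^ 2 ≤ (1 - ‖exp (t * L j)‖ ^ 2) * m j)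
    (hb : ∑ j, m j ≤ t * (b.im - enormSq a)) :
    MapsTo (siegelFlow a b k μ L t) (Siegel4 p q r) (Siegel4 p q r) := by
  intro x hx
  rw [mem_siegel4_iff] at hx ⊢
  have hv : 0 ≤ ∑ j, (1 - ‖exp (t * μ j)‖ ^ 2) * ‖x.2.2.1 j‖ ^ 2 :=
    Finset.sum_nonneg fun j _ =>
      mul_nonneg (sub_nonneg.mpr (sq_norm_exp_ofReal_mul_le_one ht (hμ j))) (sq_nonneg _)
  have hw : -∑ j, m j ≤ ∑ j, ((1 - ‖exp (t * L j)‖ ^ 2) * ‖x.2.2.2 j‖ ^ 2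
      + 2 * ((1 - exp (t * L j)) * k j * x.2.2.2 j).re) := by
    rw [← sub_nonneg, sub_neg_eq_add, ← Finset.sum_add_distrib]
    refine Finset.sum_nonneg fun j _ => ?_
    exact quadratic_nonneg_of_norm_sq_le (sub_nonneg.mpr (sq_norm_exp_ofReal_mul_le_one ht (hL j)))
      (hm j) (hk j) (x.2.2.2 j)
  rw [siegelHeight_siegelFlow]
  linarith

lemma isHolSemigroupOn_siegelFlow
    (hmaps : ∀ t, 0 ≤ t → MapsTo (siegelFlow a b k μ L t) (Siegel4 p q r) (Siegel4 p q r)) :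
    IsHolSemigroupOn (Siegel4 p q r) (siegelFlow a b k μ L) := by
  refine ⟨hmaps, fun t _ => (differentiable_siegelFlow t).differentiableOn,
    fun x _ => siegelFlow_zero x, fun s _ t _ x _ => siegelFlow_add s t x,
    fun K _ hK => ?_⟩
  have h : TendstoUniformlyOn (siegelFlow a b k μ L) (siegelFlow a b k μ L 0) (nhds 0) K :=
    continuous_uncurry_siegelFlow.tendstoUniformlyOn_of_isCompact 0 hK
  rw [funext siegelFlow_zero] at h
  exact fun u hu => (h u hu).filter_mono nhdsWithin_le_nhds

lemma mapsTo_siegelFlow_of_sum_le {uu vv : Fin r → ℝ} (huu : ∀ j, 0 < uu j) (c d : Fin r → ℂ)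
    (hμ : ∀ j, (μ j).re ≤ 0)
    (hb : ∑ j, (uu j ^ 2 + vv j ^ 2) / (2 * uu j * ‖1 - d j‖ ^ 2) * ‖c j‖ ^ 2 ≤ b.im - enormSq a)
    {t : ℝ} (ht : 0 ≤ t) :
    MapsTo (siegelFlow a b (fun j => conj (c j) / (1 - d j)) μ
      (fun j => -(uu j : ℂ) + (vv j : ℂ) * I) t) (Siegel4 p q r) (Siegel4 p q r) := by
  refine mapsTo_siegelFlow ht hμ (fun j => by simpa using (huu j).le)
    (fun j => t * ((uu j ^ 2 + vv j ^ 2) / (2 * uu j * ‖1 - d j‖ ^ 2) * ‖c j‖ ^ 2))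
    (fun j => by have := huu j; positivity) (fun j => ?_)
    (by rw [← Finset.mul_sum]; exact mul_le_mul_of_nonneg_left hb ht)
  calc ‖(1 - exp (t * (-(uu j : ℂ) + (vv j : ℂ) * I))) * (conj (c j) / (1 - d j))‖ ^ 2
      = ‖1 - exp (t * (-(uu j : ℂ) + (vv j : ℂ) * I))‖ ^ 2 * (‖c j‖ ^ 2 / ‖1 - d j‖ ^ 2) := by
        rw [norm_mul, norm_div, RCLike.norm_conj, mul_pow, div_pow]
    _ ≤ t * (uu j ^ 2 + vv j ^ 2) / (2 * uu j)
          * (1 - ‖exp (t * (-(uu j : ℂ) + (vv j : ℂ) * I))‖ ^ 2) * (‖c j‖ ^ 2 / ‖1 - d j‖ ^ 2) := by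
        gcongr
        exact norm_one_sub_exp_sq_le (huu j) (vv j) ht
    _ = _ := by ring

lemma siegelFlow_one (c : Fin r → ℂ) {e : Fin q → ℂ} {d : Fin r → ℂ} (he : ∀ j, exp (μ j) = e j)
    (hd : ∀ j, exp (L j) = d j) (hk : ∀ j, (1 - d j) * k j = conj (c j)) (x : E4 p q r) :
    siegelFlow a b k μ L 1 x = (x.1 + 2 * I * herm x.2.1 a + 2 * I * herm x.2.2.2 c + b,
      x.2.1 + a, (diagonal e).mulVec x.2.2.1, (diagonal d).mulVec x.2.2.2) := by
  have hsum : ∑ j, (1 - exp (L j)) * k j * x.2.2.2 j = herm x.2.2.2 c :=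
    Finset.sum_congr rfl fun j _ => by rw [hd, ← hk]; ring
  simp only [siegelFlow, ofReal_one, one_mul, one_smul, hsum, Prod.mk.injEq]
  refine ⟨by ring, trivial, funext fun j => ?_, funext fun j => ?_⟩ <;>
    simp [mulVec_diagonal, he, hd]

end SiegelFlow

theorem stmt12_general {p q r : ℕ} (a : Fin p → ℂ) (b : ℂ) (c : Fin r → ℂ)
    (e : Fin q → ℂ) (he : ∀ j, ‖e j‖ = 1)
    (uu vv : Fin r → ℝ) (huu : ∀ j, 0 < uu j)
    (d : Fin r → ℂ)
    (hd : ∀ j, d j = Complex.exp (-(uu j : ℂ) + (vv j : ℂ) * Complex.I))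
    (ψ : E4 p q r → E4 p q r)
    (hψ : ∀ x, ψ x = (x.1 + 2 * Complex.I * herm x.2.1 a
        + 2 * Complex.I * herm x.2.2.2 c + b,
      x.2.1 + a, (Matrix.diagonal e).mulVec x.2.2.1,
      (Matrix.diagonal d).mulVec x.2.2.2))
    (hb : b.im - enormSq a ≥ ∑ j : Fin r,
      (uu j ^ 2 + vv j ^ 2) / (2 * uu j * ‖1 - d j‖ ^ 2) * ‖c j‖ ^ 2) :
    ∃ φt : ℝ → E4 p q r → E4 p q r,
      IsHolSemigroupOn (Siegel4 p q r) φt ∧ ∀ z ∈ Siegel4 p q r, φt 1 z = ψ z := by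
  have hd1 : ∀ j, 1 - d j ≠ 0 := fun j h => by
    have : ‖d j‖ < 1 := by simpa [hd, norm_exp] using huu j
    simp [← sub_eq_zero.mp h] at this
  refine ⟨siegelFlow a b (fun j => conj (c j) / (1 - d j)) (fun j => log (e j))
      (fun j => -(uu j : ℂ) + (vv j : ℂ) * I),
    isHolSemigroupOn_siegelFlow fun t ht =>
      mapsTo_siegelFlow_of_sum_le huu c d (fun j => by simp [log_re, he j]) hb ht,
    fun x _ => ?_⟩
  rw [hψ, siegelFlow_one c (fun j => exp_log (norm_pos_iff.mp (by simp [he j])))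
    (fun j => (hd j).symm) (fun j => mul_div_cancel₀ _ (hd1 j))]

/-- Let `ψ(z,u,v,w) = (z + 2i⟨u,a⟩ + 2i⟨w,c⟩ + b, u + a, Dv, Aw)` be a parabolic
self-map of `ℍ^N`, where `D` is diagonal with unimodular diagonal entries
different from `1`, and `A = diag(λ₁, …, λ_r)` with `λ_j = exp(-u_j + i v_j)`,
`u_j > 0`, `v_j ∈ [0, 2π)`. If
`Im b - |a|² ≥ ∑_j (u_j² + v_j²)/(2 u_j |1 - λ_j|²) |c_j|²`, then `ψ` embeds into
a semigroup of holomorphic self-maps of `ℍ^N`. -/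
theorem stmt12 {p q r : ℕ} (a : Fin p → ℂ) (b : ℂ) (c : Fin r → ℂ)
    (e : Fin q → ℂ) (he : ∀ j, ‖e j‖ = 1) (he1 : ∀ j, e j ≠ 1)
    (uu vv : Fin r → ℝ) (huu : ∀ j, 0 < uu j)
    (hvv : ∀ j, vv j ∈ Ico (0 : ℝ) (2 * Real.pi))
    (d : Fin r → ℂ)
    (hd : ∀ j, d j = Complex.exp (-(uu j : ℂ) + (vv j : ℂ) * Complex.I))
    (ψ : E4 p q r → E4 p q r)
    (hψ : ∀ x, ψ x = (x.1 + 2 * Complex.I * herm x.2.1 a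
        + 2 * Complex.I * herm x.2.2.2 c + b,
      x.2.1 + a, (Matrix.diagonal e).mulVec x.2.2.1,
      (Matrix.diagonal d).mulVec x.2.2.2))
    (hself : MapsTo ψ (Siegel4 p q r) (Siegel4 p q r))
    (hb : b.im - enormSq a ≥ ∑ j : Fin r,
      (uu j ^ 2 + vv j ^ 2) / (2 * uu j * ‖1 - d j‖ ^ 2) * ‖c j‖ ^ 2) :
    ∃ φt : ℝ → E4 p q r → E4 p q r,
      IsHolSemigroupOn (Siegel4 p q r) φt ∧ ∀ z ∈ Siegel4 p q r, φt 1 z = ψ z :=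
  stmt12_general a b c e he uu vv huu d hd ψ hψ hb
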